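/- For a geometric-type stopping rule with n stages where stage i succeeds independently with probability P_i ≥ c (for i < n) and stage n always occurs if reached, the expected cost savings (K - E[N_call])/K is at least 1 - 1/(n·c) whenever n·c ≥ 1, where E[N_call] = (K/n)·Σ_{i=1}^n i·(Π_{j=1}^{i-1}(1-P_j))·P_i with P_n := 1. -/
import Mathlib

open Finset in
lemma tele_aux (n : ℕ) (q : ℕ → ℝ) :
    ∑ i ∈ range n, (i + 1 : ℝ) * (q i - q (i + 1))
      = (∑ i ∈ range n, q i) - n * q n := by
  induction n with
  | zero => simp
  | succ m ih =>
    rw [Finset.sum_range_succ, Finset.sum_range_succ, ih]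
    push_cast
    ring

open Finset in
/-- Expected cost savings of ModelSwitch: with `n` stages of `K/n` samples each, stage
`i` succeeding with probability `P i ≥ c` (last stage certain), and
`E[N_call] = (K/n)·∑ᵢ i·(∏_{j<i}(1-P j))·P i`, the savings fraction
`(K - E[N_call])/K` is at least `1 - 1/(n·c)` whenever `n·c ≥ 1`. -/
theorem stmt_14 (n : ℕ) (hn : 0 < n) (K c : ℝ) (hK : 0 < K) (hc : 0 < c)
    (hnc : 1 ≤ n * c)
    (P : ℕ → ℝ)
    (hcP : ∀ i < n, c ≤ P i) (hP1 : ∀ i < n, P i ≤ 1)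
    (hlast : P (n - 1) = 1) :
    (K - (K / n) * ∑ i ∈ range n,
        (i + 1 : ℝ) * (∏ j ∈ range i, (1 - P j)) * P i) / K
      ≥ 1 - 1 / (n * c) := by
  set q : ℕ → ℝ := fun i => ∏ j ∈ range i, (1 - P j) with hq
  have hc1 : c ≤ 1 := le_trans (hcP 0 hn) (hP1 0 hn)
  have hqn : q n = 0 := by
    apply Finset.prod_eq_zero (Finset.mem_range.mpr (Nat.sub_lt hn one_pos))
    rw [hlast]; ring
  have hstep : ∀ i, q i * P i = q i - q (i + 1) := by
    intro i
    simp only [hq, Finset.prod_range_succ]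
    ring
  have hsum : ∑ i ∈ range n, (i + 1 : ℝ) * q i * P i = ∑ i ∈ range n, q i := by
    have : ∑ i ∈ range n, (i + 1 : ℝ) * q i * P i
        = ∑ i ∈ range n, (i + 1 : ℝ) * (q i - q (i + 1)) := by
      refine Finset.sum_congr rfl fun i _ => ?_
      rw [mul_assoc, hstep]
    rw [this, tele_aux, hqn, mul_zero, sub_zero]
  have hqbound : ∀ i < n, q i ≤ (1 - c) ^ i := by
    intro i hi
    simp only [hq]
    calc ∏ j ∈ range i, (1 - P j) ≤ ∏ _j ∈ range i, (1 - c) := by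
          apply Finset.prod_le_prod
          · intro j hj
            have hj' : j < n := lt_trans (Finset.mem_range.mp hj) hi
            linarith [hP1 j hj']
          · intro j hj
            have hj' : j < n := lt_trans (Finset.mem_range.mp hj) hi
            linarith [hcP j hj']
      _ = (1 - c) ^ i := by simp
  have hgeom : ∑ i ∈ range n, (1 - c) ^ i ≤ 1 / c := by
    have h1 : (1 - (1 - c)) * ∑ i ∈ range n, (1 - c) ^ i = 1 - (1 - c) ^ n :=
      mul_neg_geom_sum (1 - c) n
    have h2 : (0:ℝ) ≤ (1 - c) ^ n := pow_nonneg (by linarith) n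
    rw [le_div_iff₀ hc]
    nlinarith
  have hS : ∑ i ∈ range n, (i + 1 : ℝ) * q i * P i ≤ 1 / c := by
    rw [hsum]
    calc ∑ i ∈ range n, q i ≤ ∑ i ∈ range n, (1 - c) ^ i :=
          Finset.sum_le_sum fun i hi => hqbound i (Finset.mem_range.mp hi)
      _ ≤ 1 / c := hgeom
  have hn' : (0:ℝ) < n := Nat.cast_pos.mpr hn
  set S := ∑ i ∈ range n, (i + 1 : ℝ) * q i * P i with hSdef
  have hrw : (K - (K / n) * S) / K = 1 - S / n := by
    field_simp
  have hSc : S * c ≤ 1 := (le_div_iff₀ hc).mp hS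
  have key : S / n ≤ 1 / (n * c) := by
    rw [div_le_div_iff₀ hn' (by positivity)]
    nlinarith
  rw [hrw]; linarith
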